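/- Assume (H1), (H3), (H5), let μ > 0 satisfy γ₁ − μ > L, let a : ℝ → ℝⁿ be Borel measurable, and for v₀ ∈ ℝᵐ let F̌⁰(v₀) be the value at 0 of the unique solution in C⁻_μ(ℝⁿ) of û_t = ∫_{−∞}^t e^{A(t−r)} U(û_r + a(r), v₀) dr, t ≤ 0. Then for all v₀¹, v₀² ∈ ℝᵐ: |F̌⁰(v₀¹) − F̌⁰(v₀²)| ≤ (L/(γ₁ − μ − L)) |v₀¹ − v₀²|. -/

import Mathlib

open scoped RealInnerProductSpace
open MeasureTheory

/-!
By (H1), `‖e^{sA} x‖ ≤ e^{-γ₁ s} ‖x‖` for `s ≥ 0`. Put `Δ(t) = ‖û¹_t - û²_t‖` and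
`S = sup_{t ≤ 0} e^{μt} Δ(t)`, finite because both solutions lie in `C⁻_μ`. Subtracting the two
integral equations and using (H3), `Δ(r) + ‖v₀¹ - v₀²‖ ≤ (S + ‖v₀¹ - v₀²‖) e^{-μr}` for `r ≤ 0`, so
`e^{μt} Δ(t) ≤ L (S + ‖v₀¹ - v₀²‖) / (γ₁ - μ)`. Taking the supremum gives a linear inequality
for `S` with slope `L / (γ₁ - μ) < 1`, whence `Δ(0) ≤ S ≤ L / (γ₁ - μ - L) ‖v₀¹ - v₀²‖`.
-/

/-- `û` solves the limiting (`ε = 0`) integral equation on `(-∞, 0]`: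
`û_t = ∫_{-∞}^t e^{A(t-r)} U(û_r + a(r), v₀) dr`, as an element of `C⁻_μ(ℝⁿ)`
(continuity on `(-∞, 0]` and finiteness of `sup_{t ≤ 0} e^{μ t} ‖û_t‖`). -/
def IsLimitStarSolution (n m : ℕ) (μ : ℝ)
    (A : EuclideanSpace ℝ (Fin n) →L[ℝ] EuclideanSpace ℝ (Fin n))
    (U : EuclideanSpace ℝ (Fin n) × EuclideanSpace ℝ (Fin m) → EuclideanSpace ℝ (Fin n))
    (a : ℝ → EuclideanSpace ℝ (Fin n)) (v₀ : EuclideanSpace ℝ (Fin m))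
    (uh : ℝ → EuclideanSpace ℝ (Fin n)) : Prop :=
  ContinuousOn uh (Set.Iic 0) ∧
  (∃ K : ℝ, ∀ t : ℝ, t ≤ 0 → Real.exp (μ * t) * ‖uh t‖ ≤ K) ∧
  (∀ t : ℝ, t ≤ 0 →
    uh t = ∫ r in Set.Iic t, NormedSpace.exp ((t - r) • A) (U (uh r + a r, v₀)))

open Set

section Semigroup

variable {E : Type*} [NormedAddCommGroup E] [InnerProductSpace ℝ E] [CompleteSpace E]
  {A : E →L[ℝ] E} {γ : ℝ}

theorem norm_exp_smul_apply_le (hA : ∀ x, ⟪A x, x⟫ ≤ -γ * ‖x‖ ^ 2) {s : ℝ} (hs : 0 ≤ s) (x : E) :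
    ‖NormedSpace.exp (s • A) x‖ ≤ Real.exp (-γ * s) * ‖x‖ := by
  set y : ℝ → E := fun u => NormedSpace.exp (u • A) x
  have hy : ∀ u, HasDerivAt y (A (y u)) u := fun u => by
    simpa [y] using (hasDerivAt_exp_smul_const' A u).clm_apply (hasDerivAt_const u x)
  -- `d/du ‖y u‖² = 2 ⟪A y, y⟫ ≤ -2γ ‖y u‖²`, so `e^{2γu} ‖y u‖²` is nonincreasing.
  have hφ : ∀ u, HasDerivAt (fun u => Real.exp (2 * γ * u) * ‖y u‖ ^ 2)
      (Real.exp (2 * γ * u) * (2 * γ) * ‖y u‖ ^ 2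
        + Real.exp (2 * γ * u) * (2 * ⟪y u, A (y u)⟫)) u :=
    fun u => (((hasDerivAt_id u).const_mul (2 * γ)).exp.congr_deriv (by simp)).mul (hy u).norm_sq
  have hanti : Antitone fun u => Real.exp (2 * γ * u) * ‖y u‖ ^ 2 := by
    refine antitone_of_deriv_nonpos (fun u => (hφ u).differentiableAt) fun u => ?_
    rw [(hφ u).deriv, real_inner_comm]
    nlinarith [mul_le_mul_of_nonneg_left (hA (y u)) (Real.exp_pos (2 * γ * u)).le]
  have hsq : ‖y s‖ ^ 2 ≤ (Real.exp (-γ * s) * ‖x‖) ^ 2 := by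
    have h := hanti hs
    simp only [y, mul_zero, zero_smul, NormedSpace.exp_zero, Real.exp_zero, one_mul] at h
    have he : Real.exp (2 * γ * s) * Real.exp (-γ * s) ^ 2 = 1 := by
      rw [← Real.exp_nat_mul, ← Real.exp_add]; ring_nf; exact Real.exp_zero
    calc ‖y s‖ ^ 2 = Real.exp (-γ * s) ^ 2 * (Real.exp (2 * γ * s) * ‖y s‖ ^ 2) := by
          linear_combination (‖y s‖ ^ 2) * he.symm
      _ ≤ Real.exp (-γ * s) ^ 2 * ‖x‖ ^ 2 := by gcongr; simpa using h
      _ = _ := by ring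
  exact (pow_le_pow_iff_left₀ (norm_nonneg _) (by positivity) two_ne_zero).1 hsq

theorem norm_exp_sub_smul_apply_le (hA : ∀ x, ⟪A x, x⟫ ≤ -γ * ‖x‖ ^ 2) {μ C t r : ℝ} {x : E}
    (hrt : r ≤ t) (hx : ‖x‖ ≤ C * Real.exp (-μ * r)) :
    ‖NormedSpace.exp ((t - r) • A) x‖ ≤ C * Real.exp (-γ * t) * Real.exp ((γ - μ) * r) :=
  calc ‖NormedSpace.exp ((t - r) • A) x‖ ≤ Real.exp (-γ * (t - r)) * ‖x‖ :=
        norm_exp_smul_apply_le hA (sub_nonneg.2 hrt) x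
    _ ≤ Real.exp (-γ * (t - r)) * (C * Real.exp (-μ * r)) := by gcongr
    _ = C * Real.exp (-γ * t) * Real.exp ((γ - μ) * r) := by
        rw [mul_left_comm, mul_assoc, ← Real.exp_add, ← Real.exp_add]; ring_nf

variable {μ C t : ℝ} {g : ℝ → E}

theorem integrableOn_Iic_exp_sub_smul_apply (hA : ∀ x, ⟪A x, x⟫ ≤ -γ * ‖x‖ ^ 2) (hμγ : μ < γ)
    (hg : AEStronglyMeasurable g (volume.restrict (Iic t)))
    (hgC : ∀ r ≤ t, ‖g r‖ ≤ C * Real.exp (-μ * r)) :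
    IntegrableOn (fun r => NormedSpace.exp ((t - r) • A) (g r)) (Iic t) := by
  refine Integrable.mono' ((integrableOn_exp_mul_Iic (sub_pos.2 hμγ) t).const_mul
    (C * Real.exp (-γ * t))) ?_ ((ae_restrict_mem measurableSet_Iic).mono fun r hr =>
      norm_exp_sub_smul_apply_le hA hr (hgC r hr))
  have hexp : Continuous fun u : ℝ => NormedSpace.exp (u • A) :=
    continuous_iff_continuousAt.2 fun u => (hasDerivAt_exp_smul_const' A u).continuousAt
  exact (ContinuousLinearMap.apply ℝ E).aestronglyMeasurable_comp₂ hg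
    (hexp.comp (continuous_sub_left t)).aestronglyMeasurable

theorem norm_integral_Iic_exp_sub_smul_apply_le (hA : ∀ x, ⟪A x, x⟫ ≤ -γ * ‖x‖ ^ 2)
    (hμγ : μ < γ) (hgC : ∀ r ≤ t, ‖g r‖ ≤ C * Real.exp (-μ * r)) :
    ‖∫ r in Iic t, NormedSpace.exp ((t - r) • A) (g r)‖ ≤ C * Real.exp (-μ * t) / (γ - μ) :=
  calc ‖∫ r in Iic t, NormedSpace.exp ((t - r) • A) (g r)‖
      ≤ ∫ r in Iic t, C * Real.exp (-γ * t) * Real.exp ((γ - μ) * r) :=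
        norm_integral_le_of_norm_le ((integrableOn_exp_mul_Iic (sub_pos.2 hμγ) t).const_mul _)
          (ae_restrict_of_forall_mem measurableSet_Iic fun r hr =>
            norm_exp_sub_smul_apply_le hA hr (hgC r hr))
    _ = C * Real.exp (-μ * t) / (γ - μ) := by
        rw [integral_const_mul, integral_exp_mul_Iic (sub_pos.2 hμγ), mul_div_assoc,
          mul_assoc, ← mul_div_assoc, ← Real.exp_add]
        ring_nf

end Semigroup

theorem le_div_one_sub_of_forall_le_mul_add {α : Type*} {s : Set α} {w : α → ℝ} {q c : ℝ}
    {x₀ : α} (hx₀ : x₀ ∈ s) (hw : BddAbove (w '' s)) (hq : q < 1)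
    (h : ∀ S, (∀ x ∈ s, w x ≤ S) → ∀ x ∈ s, w x ≤ q * S + c) :
    w x₀ ≤ c / (1 - q) := by
  have hS : ∀ x ∈ s, w x ≤ sSup (w '' s) := fun x hx => le_csSup hw (mem_image_of_mem w hx)
  have hfix : sSup (w '' s) ≤ q * sSup (w '' s) + c :=
    csSup_le ⟨w x₀, mem_image_of_mem w hx₀⟩ (forall_mem_image.2 (h _ hS))
  rw [le_div_iff₀ (sub_pos.2 hq)]
  nlinarith [hS x₀ hx₀]

namespace IsLimitStarSolution

variable {n m : ℕ} {γ L M μ t : ℝ} {A : EuclideanSpace ℝ (Fin n) →L[ℝ] EuclideanSpace ℝ (Fin n)}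
  {U : EuclideanSpace ℝ (Fin n) × EuclideanSpace ℝ (Fin m) → EuclideanSpace ℝ (Fin n)}
  {a : ℝ → EuclideanSpace ℝ (Fin n)} {v v₁ v₂ : EuclideanSpace ℝ (Fin m)}
  {uh uh₁ uh₂ : ℝ → EuclideanSpace ℝ (Fin n)}

theorem integrableOn_integrand (hsol : IsLimitStarSolution n m μ A U a v uh)
    (hA : ∀ x, ⟪A x, x⟫ ≤ -γ * ‖x‖ ^ 2) (hγ : 0 < γ) (hU : Continuous fun x => U (x, v))
    (hUM : ∀ z, ‖U z‖ ≤ M) (ha : Measurable a) (ht : t ≤ 0) :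
    IntegrableOn (fun r => NormedSpace.exp ((t - r) • A) (U (uh r + a r, v))) (Iic t) := by
  have huh : AEStronglyMeasurable uh (volume.restrict (Iic t)) :=
    (hsol.1.mono (Iic_subset_Iic.2 ht)).aestronglyMeasurable measurableSet_Iic
  refine integrableOn_Iic_exp_sub_smul_apply (μ := 0) (C := M) hA hγ
    (hU.comp_aestronglyMeasurable (huh.add ha.aestronglyMeasurable)) fun r _ => ?_
  simpa using hUM _

theorem bddAbove_weighted_norm_sub (hsol₁ : IsLimitStarSolution n m μ A U a v₁ uh₁)
    (hsol₂ : IsLimitStarSolution n m μ A U a v₂ uh₂) :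
    BddAbove ((fun t => Real.exp (μ * t) * ‖uh₁ t - uh₂ t‖) '' Iic 0) := by
  obtain ⟨K₁, hK₁⟩ := hsol₁.2.1
  obtain ⟨K₂, hK₂⟩ := hsol₂.2.1
  refine ⟨K₁ + K₂, forall_mem_image.2 fun t ht => ?_⟩
  calc Real.exp (μ * t) * ‖uh₁ t - uh₂ t‖ ≤ Real.exp (μ * t) * (‖uh₁ t‖ + ‖uh₂ t‖) := by
        gcongr; exact norm_sub_le _ _
    _ ≤ K₁ + K₂ := by rw [mul_add]; exact add_le_add (hK₁ t ht) (hK₂ t ht)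

theorem weighted_norm_sub_le (hsol₁ : IsLimitStarSolution n m μ A U a v₁ uh₁)
    (hsol₂ : IsLimitStarSolution n m μ A U a v₂ uh₂)
    (hA : ∀ x, ⟪A x, x⟫ ≤ -γ * ‖x‖ ^ 2) (hγ : 0 < γ) (hL : 0 ≤ L)
    (hUL : ∀ x₁ y₁ x₂ y₂, ‖U (x₁, y₁) - U (x₂, y₂)‖ ≤ L * (‖x₁ - x₂‖ + ‖y₁ - y₂‖))
    (hUM : ∀ z, ‖U z‖ ≤ M) (ha : Measurable a) (hμ : 0 ≤ μ) (hμγ : μ < γ) {S : ℝ}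
    (hS : ∀ r ≤ 0, Real.exp (μ * r) * ‖uh₁ r - uh₂ r‖ ≤ S) (ht : t ≤ 0) :
    Real.exp (μ * t) * ‖uh₁ t - uh₂ t‖ ≤ L / (γ - μ) * S + L / (γ - μ) * ‖v₁ - v₂‖ := by
  have hU : ∀ v, Continuous fun x => U (x, v) := fun v =>
    (LipschitzWith.of_dist_le_mul (K := ⟨L, hL⟩) fun x y => show _ ≤ L * _ by
      simpa [dist_eq_norm] using hUL x v y v).continuous
  have hdiff : uh₁ t - uh₂ t = ∫ r in Iic t,
      NormedSpace.exp ((t - r) • A) (U (uh₁ r + a r, v₁) - U (uh₂ r + a r, v₂)) := by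
    rw [hsol₁.2.2 t ht, hsol₂.2.2 t ht,
      ← integral_sub (hsol₁.integrableOn_integrand hA hγ (hU v₁) hUM ha ht)
        (hsol₂.integrableOn_integrand hA hγ (hU v₂) hUM ha ht)]
    simp only [map_sub]
  have hbound : ∀ r ≤ t, ‖U (uh₁ r + a r, v₁) - U (uh₂ r + a r, v₂)‖
      ≤ L * (S + ‖v₁ - v₂‖) * Real.exp (-μ * r) := fun r hrt => by
    have hr : r ≤ 0 := hrt.trans ht
    have hΔ : ‖uh₁ r - uh₂ r‖ ≤ S * Real.exp (-μ * r) := by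
      rw [neg_mul, Real.exp_neg, ← div_eq_mul_inv, le_div_iff₀' (Real.exp_pos _)]
      exact hS r hr
    have hv : ‖v₁ - v₂‖ ≤ ‖v₁ - v₂‖ * Real.exp (-μ * r) :=
      le_mul_of_one_le_right (norm_nonneg _) (Real.one_le_exp (by nlinarith))
    calc ‖U (uh₁ r + a r, v₁) - U (uh₂ r + a r, v₂)‖ ≤ L * (‖uh₁ r - uh₂ r‖ + ‖v₁ - v₂‖) := by
          simpa using hUL (uh₁ r + a r) v₁ (uh₂ r + a r) v₂
      _ ≤ L * (S * Real.exp (-μ * r) + ‖v₁ - v₂‖ * Real.exp (-μ * r)) := by gcongr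
      _ = L * (S + ‖v₁ - v₂‖) * Real.exp (-μ * r) := by ring
  calc Real.exp (μ * t) * ‖uh₁ t - uh₂ t‖
      ≤ Real.exp (μ * t) * (L * (S + ‖v₁ - v₂‖) * Real.exp (-μ * t) / (γ - μ)) := by
        rw [hdiff]; gcongr; exact norm_integral_Iic_exp_sub_smul_apply_le hA hμγ hbound
    _ = L * (S + ‖v₁ - v₂‖) / (γ - μ) * (Real.exp (μ * t) * Real.exp (-μ * t)) := by ring
    _ = L / (γ - μ) * S + L / (γ - μ) * ‖v₁ - v₂‖ := by
        rw [← Real.exp_add, neg_mul, add_neg_cancel, Real.exp_zero]; ring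

end IsLimitStarSolution

/-- estimate (5.4). Under (H1), (H3), (H5) and `γ₁ - μ > L` (`μ > 0`),
the graph map `F̌⁰` of the invariant manifold `M̌⁰` of the `ε = 0` system (sending `v₀` to the
value at `0` of the unique solution in `C⁻_μ(ℝⁿ)` of
`û_t = ∫_{-∞}^t e^{A(t-r)} U(û_r + a(r), v₀) dr`) satisfies
`‖F̌⁰(v₀¹) - F̌⁰(v₀²)‖ ≤ (L/(γ₁ - μ - L)) ‖v₀¹ - v₀²‖` for all `v₀¹, v₀² ∈ ℝᵐ`. -/
theorem limit_graph_map_lipschitz (n m : ℕ)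
    (γ₁ L MU μ : ℝ)
    (A : EuclideanSpace ℝ (Fin n) →L[ℝ] EuclideanSpace ℝ (Fin n))
    (U : EuclideanSpace ℝ (Fin n) × EuclideanSpace ℝ (Fin m) → EuclideanSpace ℝ (Fin n))
    -- (H1)
    (hγ₁ : 0 < γ₁)
    (hA : ∀ x : EuclideanSpace ℝ (Fin n), ⟪A x, x⟫ ≤ -γ₁ * ‖x‖ ^ 2)
    -- (H3)
    (hL : 0 < L)
    (hUL : ∀ x₁ y₁ x₂ y₂, ‖U (x₁, y₁) - U (x₂, y₂)‖ ≤ L * (‖x₁ - x₂‖ + ‖y₁ - y₂‖))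
    -- (H5)
    (hMU : ∀ z, ‖U z‖ ≤ MU)
    -- scales: μ > 0, γ₁ - μ > L
    (hμ : 0 < μ) (hμL : L < γ₁ - μ)
    -- input path
    (a : ℝ → EuclideanSpace ℝ (Fin n)) (ha : Measurable a)
    -- two anchors and the corresponding solutions
    (v₁ v₂ : EuclideanSpace ℝ (Fin m))
    (uh₁ uh₂ : ℝ → EuclideanSpace ℝ (Fin n))
    (hsol₁ : IsLimitStarSolution n m μ A U a v₁ uh₁)
    (hsol₂ : IsLimitStarSolution n m μ A U a v₂ uh₂) :
    ‖uh₁ 0 - uh₂ 0‖ ≤ L / (γ₁ - μ - L) * ‖v₁ - v₂‖ := by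
  have hγμ : 0 < γ₁ - μ := hL.trans hμL
  have hq : L / (γ₁ - μ) < 1 := (div_lt_one hγμ).2 hμL
  have hsup := le_div_one_sub_of_forall_le_mul_add self_mem_Iic
    (hsol₁.bddAbove_weighted_norm_sub hsol₂) hq fun S hS t ht =>
      hsol₁.weighted_norm_sub_le hsol₂ hA hγ₁ hL.le hUL hMU ha hμ.le (by linarith) hS ht
  have hconst : L / (γ₁ - μ) * ‖v₁ - v₂‖ / (1 - L / (γ₁ - μ)) = L / (γ₁ - μ - L) * ‖v₁ - v₂‖ := by
    field_simp
  simpa [hconst] using hsup
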